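/- arXiv:math/0409020 — 2 statements merged into one kernel-verified Lean document; each statement's English description precedes it below -/
import Mathlib

section
/- Let C := Y² + Y − (X³ + X² − 44704·X − 3655907) in ℚ[X,Y], and let F4, F9, F14 be the polynomials defined in the context. Then C divides 64·F4⁷ − 343·F9³ − F14² in ℚ[X,Y]. (Equivalently, in the coordinate ring ℚ[X,Y]/(C) of the elliptic curve y² + y = x³ + x² − 44704x − 3655907 one has the identity 64·F4⁷ − 343·F9³ = F14².) -/
open MvPolynomial

/-- `X` as an element of `ℚ[X,Y]`. -/
noncomputable def XX : MvPolynomial (Fin 2) ℚ := MvPolynomial.X 0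

/-- `Y` as an element of `ℚ[X,Y]`. -/
noncomputable def YY : MvPolynomial (Fin 2) ℚ := MvPolynomial.X 1

/-- The Weierstrass equation of the elliptic curve `y² + y = x³ + x² − 44704x − 3655907`. -/
noncomputable def Ccurve : MvPolynomial (Fin 2) ℚ :=
  YY ^ 2 + YY - (XX ^ 3 + XX ^ 2 - 44704 * XX - 3655907)

noncomputable def F4 : MvPolynomial (Fin 2) ℚ :=
  XX ^ 2 - 1208 * XX - 227671 + 91 * YY

noncomputable def F9 : MvPolynomial (Fin 2) ℚ :=
  (8 * XX ^ 3 - 384 * XX ^ 2 - 13656232 * XX - 678909344) * YY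
    - (1015 * XX ^ 4 + 770584 * XX ^ 3 + 163098512 * XX ^ 2 + 29785004488 * XX
        + 2319185361392)

noncomputable def F14 : MvPolynomial (Fin 2) ℚ :=
  8 * XX ^ 7 + 400071 * XX ^ 6 - 343453068 * XX ^ 5 - 238003853192 * XX ^ 4
    - 116011622641292 * XX ^ 3 - 15704111899877744 * XX ^ 2
    - 95316727595264672 * XX + 53553894620234333456
    - (8428 * XX ^ 5 + 19974360 * XX ^ 4 + 18880768004 * XX ^ 3 + 4128079708928 * XX ^ 2
        + 335969653582304 * XX + 17681731246686360) * YY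

/-- Obtained by long division of `64 * F4 ^ 7 - 343 * F9 ^ 3 - F14 ^ 2` by `Ccurve` in `Y`,
which is possible because `Ccurve` is monic in `Y`. -/
noncomputable def relationCofactor : MvPolynomial (Fin 2) ℚ :=
  (6942320 * XX ^ 10 - 205972323200 * XX ^ 9 - 1091790857902752 * XX ^ 8
      - 878116879136572544 * XX ^ 7 - 429044969963443056720 * XX ^ 6
      - 96015811143671219925824 * XX ^ 5 - 9766402494980190940800192 * XX ^ 4
      + 2666018009512916607840346048 * XX ^ 3 + 613745440960703214527970126976 * XX ^ 2
      + 29337071919463081804561638643200 * XX - 169225839021835763005496215483968)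
  + (-175616 * XX ^ 9 + 1713287744 * XX ^ 8 + 1128711625664 * XX ^ 7 - 3746892594645312 * XX ^ 6
      + 162502904678070656 * XX ^ 5 + 2512185856402976347776 * XX ^ 4
      + 2431262864063284857105920 * XX ^ 3 + 586970729860078435133483648 * XX ^ 2
      + 67534157120680857330401276928 * XX + 3098854636120809292892473696640) * YY
  + (153607912640 * XX ^ 6 - 302269650492992 * XX ^ 5 + 260471554992434240 * XX ^ 4
      - 86888441159594296768 * XX ^ 3 - 116471976926686973411456 * XX ^ 2
      - 25146232257540675372023296 * XX - 1601402849210169750572411584) * YY ^ 2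
  + (8386992030144 * XX ^ 4 - 16955702220941120 * XX ^ 3 + 8422938677985197184 * XX ^ 2
      + 4465750368041175496192 * XX + 422698902004674549491328) * YY ^ 3
  + (254405424914368 * XX ^ 2 - 307321753296556544 * XX - 57924044766202963712) * YY ^ 4
  + 3307270523886784 * YY ^ 5

theorem relation_eq_Ccurve_mul_relationCofactor :
    64 * F4 ^ 7 - 343 * F9 ^ 3 - F14 ^ 2 = Ccurve * relationCofactor := by
  unfold Ccurve F4 F9 F14 relationCofactor
  ring

theorem curve_divides_identity :
    Ccurve ∣ 64 * F4 ^ 7 - 343 * F9 ^ 3 - F14 ^ 2 :=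
  Dvd.intro _ relation_eq_Ccurve_mul_relationCofactor.symm
end

section
/- Let C := Y² + Y − (X³ + X² − 44704·X − 3655907) in ℚ[X,Y], let F4, F9, F14 be the polynomials defined in the context, and define D : ℚ[X,Y] → ℚ[X,Y] by D(P) := (2Y+1)·∂P/∂X + (3X² + 2X − 44704)·∂P/∂Y (the derivation corresponding to the invariant differential ω = dx/(2y+1) on the elliptic curve y² + y = x³ + x² − 44704x − 3655907). Then there exist nonzero rational constants c₁, c₂, c₃ such that C divides each of the polynomials (3·F4·D(F9) − 7·D(F4)·F9) − c₁·F14, (2·F4·D(F14) − 7·D(F4)·F14) − c₂·F9², and (2·F9·D(F14) − 3·D(F9)·F14) − c₃·F4⁶. (This is Proposition 2(i) for the explicit model of X₀(3): F14, F9², F4⁶ are scalar multiples of 3F₄F₉′ − 7F₄′F₉, 2F₄F₁₄′ − 7F₄′F₁₄, 2F₉F₁₄′ − 3F₉′F₁₄ respectively.) -/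
open MvPolynomial

/-- The derivation on `ℚ[X,Y]` corresponding to the invariant differential
`ω = dx/(2y+1)` on the curve `y² + y = x³ + x² − 44704x − 3655907`:
`D(P) = (2Y+1)·∂P/∂X + (3X² + 2X − 44704)·∂P/∂Y`. -/
noncomputable def D (P : MvPolynomial (Fin 2) ℚ) : MvPolynomial (Fin 2) ℚ :=
  (2 * YY + 1) * pderiv 0 P + (3 * XX ^ 2 + 2 * XX - 44704) * pderiv 1 P

/-!
The three claims are identities in the coordinate ring `ℚ[X,Y]/(Ccurve)`. Since `Ccurve` is monic
in `Y`, division by it in `ℚ[X][Y]` is exact, and each divisibility is witnessed by the quotient,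
which is written out below; what remains is a polynomial identity in `ℚ[X,Y]` once `D F4`, `D F9`
and `D F14` have been expanded.
-/

lemma MvPolynomial.pderiv_ofNat {σ R : Type*} [CommSemiring R] (i : σ) (n : ℕ) [n.AtLeastTwo] :
    pderiv i (ofNat(n) : MvPolynomial σ R) = 0 := by
  rw [← map_ofNat (C : R →+* MvPolynomial σ R) n, pderiv_C]

lemma pderiv_zero_XX : pderiv 0 XX = 1 := pderiv_X_self 0

lemma pderiv_one_XX : pderiv 1 XX = 0 := pderiv_X_of_ne (by decide)

lemma pderiv_zero_YY : pderiv 0 YY = 0 := pderiv_X_of_ne (by decide)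

lemma pderiv_one_YY : pderiv 1 YY = 1 := pderiv_X_self 1

lemma D_F4 : D F4 = (4 * XX - 2416) * YY + 273 * XX ^ 2 + 184 * XX - 4069272 := by
  simp only [D, F4, pderiv_mul, pderiv_pow, map_add, map_sub, pderiv_ofNat, pderiv_zero_XX,
    pderiv_one_XX, pderiv_zero_YY, pderiv_one_YY]
  ring

lemma D_F9 : D F9 =
    (48 * XX ^ 2 - 1536 * XX - 27312464) * YY ^ 2
      - (8120 * XX ^ 3 + 4623480 * XX ^ 2 + 652394816 * XX + 59583665208) * YY
      + 24 * XX ^ 5 - 1136 * XX ^ 4 - 41331156 * XX ^ 3 - 2049185912 * XX ^ 2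
      + 608804179616 * XX + 30320178309688 := by
  simp only [D, F9, pderiv_mul, pderiv_pow, map_add, map_sub, pderiv_ofNat, pderiv_zero_XX,
    pderiv_one_XX, pderiv_zero_YY, pderiv_one_YY]
  ring

lemma D_F14 : D F14 =
    -(84280 * XX ^ 4 + 159794880 * XX ^ 3 + 113284608024 * XX ^ 2 + 16512318835712 * XX
        + 671939307164608) * YY ^ 2
      + (112 * XX ^ 6 + 4800852 * XX ^ 5 - 3434572820 * XX ^ 4 - 1904110722976 * XX ^ 3
        - 696126378151764 * XX ^ 2 - 62824703758928832 * XX - 190969424844111648) * YY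
      - 25284 * XX ^ 7 - 59939880 * XX ^ 6 - 56303086994 * XX ^ 5 - 11530784138692 * XX ^ 4
      - 173071282726720 * XX ^ 3 + 130476507392769748 * XX ^ 2 + 14952415707450189808 * XX
      + 790348796924271772768 := by
  simp only [D, F14, pderiv_mul, pderiv_pow, map_add, map_sub, pderiv_ofNat,
    pderiv_zero_XX, pderiv_one_XX, pderiv_zero_YY, pderiv_one_YY]
  ring

lemma Ccurve_dvd_bracket_F4_F9_add_F14 : Ccurve ∣ 3 * F4 * D F9 - 7 * D F4 * F9 + F14 := by
  refine ⟨(13104 * XX ^ 2 - 419328 * XX - 7456302672) * YY - 80 * XX ^ 4 - 2249272 * XX ^ 3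
    - 995498408 * XX ^ 2 - 290018621888 * XX - 9085831150808, ?_⟩
  rw [D_F4, D_F9, Ccurve, F4, F9, F14]
  ring

lemma Ccurve_dvd_bracket_F4_F14_sub_F9_sq :
    Ccurve ∣ 2 * F4 * D F14 - 7 * D F4 * F14 - 343 * F9 ^ 2 := by
  refine ⟨-(15338960 * XX ^ 4 + 29082668160 * XX ^ 3 + 20617798660368 * XX ^ 2
      + 3005242028099584 * XX + 122292953903958656) * YY
    + 65856 * XX ^ 6 + 1176640920 * XX ^ 5 - 161455524888 * XX ^ 4 - 236683614762112 * XX ^ 3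
    - 161094020743638808 * XX ^ 2 - 13835905146094608864 * XX - 185800232006822190912, ?_⟩
  rw [D_F4, D_F14, Ccurve, F4, F9, F14]
  ring

lemma Ccurve_dvd_bracket_F9_F14_sub_F4_pow_six :
    Ccurve ∣ 2 * F9 * D F14 - 3 * D F9 * F14 - 64 * F4 ^ 6 := by
  refine ⟨-36343632130624 * YY ^ 4
    + (-2396283437184 * XX ^ 2 + 2894710392118272 * XX + 545600590059249088) * YY ^ 3
    - (65831962560 * XX ^ 4 - 122706389414336 * XX ^ 3 + 66124102865853760 * XX ^ 2
      + 34589266434787291136 * XX + 3280016154563684070080) * YY ^ 2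
    - (134848 * XX ^ 7 + 619090304 * XX ^ 6 - 3647605039232 * XX ^ 5 - 2500931987062208 * XX ^ 4
      - 2559438352050657728 * XX ^ 3 - 959440503003497620224 * XX ^ 2
      - 159415844373324315768320 * XX - 8855206378626446676784128) * YY
    + 640 * XX ^ 9 - 23013184 * XX ^ 8 - 186363767200 * XX ^ 7 - 283109816891328 * XX ^ 6
    - 105952984580712192 * XX ^ 5 - 21476212663941340928 * XX ^ 4
    + 1846957156536247970144 * XX ^ 3 + 5072111308586404631872 * XX ^ 2
    - 75480064251711313907919616 * XX - 4773171204162625917716307520, ?_⟩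
  rw [D_F9, D_F14, Ccurve, F4, F9, F14]
  ring

/-- Proposition 2(i) for the explicit model of `X₀(3)`: on the curve,
`F14`, `F9²`, `F4⁶` are scalar multiples of `3F₄F₉′ − 7F₄′F₉`, `2F₄F₁₄′ − 7F₄′F₁₄`,
`2F₉F₁₄′ − 3F₉′F₁₄` respectively. -/
theorem proposition_2i :
    ∃ c₁ c₂ c₃ : ℚ, c₁ ≠ 0 ∧ c₂ ≠ 0 ∧ c₃ ≠ 0 ∧
      Ccurve ∣ (3 * F4 * D F9 - 7 * D F4 * F9) - C c₁ * F14 ∧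
      Ccurve ∣ (2 * F4 * D F14 - 7 * D F4 * F14) - C c₂ * F9 ^ 2 ∧
      Ccurve ∣ (2 * F9 * D F14 - 3 * D F9 * F14) - C c₃ * F4 ^ 6 := by
  refine ⟨-1, 343, 64, by norm_num, by norm_num, by norm_num, ?_, ?_, ?_⟩
  · simpa using Ccurve_dvd_bracket_F4_F9_add_F14
  · rw [map_ofNat C 343]
    exact Ccurve_dvd_bracket_F4_F14_sub_F9_sq
  · rw [map_ofNat C 64]
    exact Ccurve_dvd_bracket_F9_F14_sub_F4_pow_six
end
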